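/- arXiv:1309.5329 — 3 statements merged into one kernel-verified Lean document; each statement's English description precedes it below -/
import Mathlib

section
/- If W is a modular set in a matroid M and e ∈ E(M) \ W, then W is a modular set in the deletion M \ e. -/
open Set Matroid

variable {α : Type*}

/-- The rank of a set in a matroid: the supremum of cardinalities of independent subsets. -/
noncomputable def mrk (M : Matroid α) (X : Set α) : ℕ :=
  sSup {n | ∃ I, M.Indep I ∧ I ⊆ X ∧ I.ncard = n}

/-- A set `X` is modular in `M` if the rank equality holds against every flat. -/
def IsModular (M : Matroid α) (X : Set α) : Prop :=
  ∀ F, M.IsFlat F → mrk M X + mrk M F = mrk M (X ∪ F) + mrk M (X ∩ F)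

/-- A matroid is simple if every subset of the ground set with at most two elements
is independent (no loops and no parallel pairs). -/
def MSimple (M : Matroid α) : Prop :=
  ∀ X ⊆ M.E, X.ncard ≤ 2 → M.Indep X

/-- Deletion of a set of elements. -/
def mdelete (M : Matroid α) (D : Set α) : Matroid α := M ↾ (M.E \ D)

/-- Contraction of a set of elements, defined by duality. -/
def mcontract (M : Matroid α) (C : Set α) : Matroid α := (M✶ ↾ (M.E \ C))✶

/-- `N` is a minor of `M` if it is obtained by a contraction followed by a deletion. -/
def IsMinorOf (N M : Matroid α) : Prop := ∃ C D, N = mdelete (mcontract M C) D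

/-- A matroid is connected: it has no 1-separation. -/
def MConnected (M : Matroid α) : Prop :=
  ∀ A B : Set α, A ∪ B = M.E → Disjoint A B → A.Nonempty → B.Nonempty →
    mrk M M.E + 1 ≤ mrk M A + mrk M B

/-- A matroid is 3-connected: connected with no 2-separation. -/
def ThreeConnected (M : Matroid α) : Prop :=
  MConnected M ∧ ∀ A B : Set α, A ∪ B = M.E → Disjoint A B →
    2 ≤ A.ncard → 2 ≤ B.ncard → mrk M M.E + 2 ≤ mrk M A + mrk M B

/-- `M` is (isomorphic to) the uniform matroid `U_{r,n}`. -/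
def IsUnif (M : Matroid α) (r n : ℕ) : Prop :=
  M.E.Finite ∧ M.E.ncard = n ∧ ∀ I ⊆ M.E, (M.Indep I ↔ I.ncard ≤ r)

/-- `M` has a `U_{r,n}`-minor. -/
def HasUnifMinor (M : Matroid α) (r n : ℕ) : Prop :=
  ∃ N, IsMinorOf N M ∧ IsUnif N r n

/-- `M` is (isomorphic to) the Fano matroid `F₇`: a simple rank-3 matroid on 7
elements in which every line has exactly 3 points. -/
def IsFano (M : Matroid α) : Prop :=
  M.E.Finite ∧ M.E.ncard = 7 ∧ MSimple M ∧ mrk M M.E = 3 ∧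
    ∀ L, M.IsFlat L → mrk M L = 2 → L.ncard = 3

/-- `L` is a 4-point line of `M`: a rank-2 flat that is the union of exactly
four rank-1 flats. -/
def FourPointLine (M : Matroid α) (L : Set α) : Prop :=
  M.IsFlat L ∧ mrk M L = 2 ∧
    ∃ f : Fin 4 → Set α, Function.Injective f ∧
      (∀ i, M.IsFlat (f i) ∧ mrk M (f i) = 1) ∧ L = ⋃ i, f i

/-- A circuit: a minimal dependent set. -/
def MCircuit (M : Matroid α) (C : Set α) : Prop :=
  C ⊆ M.E ∧ ¬ M.Indep C ∧ ∀ x ∈ C, M.Indep (C \ {x})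

/-- `M` is (isomorphic to) `P₆`: the 6-element simple rank-3 matroid with exactly
one triangle, whose complement is a triad. -/
def IsP6 (M : Matroid α) : Prop :=
  M.E.Finite ∧ M.E.ncard = 6 ∧ MSimple M ∧ mrk M M.E = 3 ∧
    ∃ T, MCircuit M T ∧ T.ncard = 3 ∧ MCircuit M✶ (M.E \ T) ∧
      ∀ T', MCircuit M T' → T'.ncard = 3 → T' = T

/-- `C` is a circuit-hyperplane of `M`. -/
def CircuitHyperplane (M : Matroid α) (C : Set α) : Prop :=
  MCircuit M C ∧ M.IsFlat C ∧ mrk M C + 1 = mrk M M.E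

/-- `N` is obtained from `M` by relaxing the circuit-hyperplane `C`. -/
def IsRelaxationOf (N M : Matroid α) (C : Set α) : Prop :=
  N.E = M.E ∧ CircuitHyperplane M C ∧ ∀ I ⊆ M.E, (N.Indep I ↔ (M.Indep I ∨ I = C))

/-- `N` is (isomorphic to) the non-Fano matroid `F₇⁻`: a relaxation of a
circuit-hyperplane of the Fano matroid. -/
def IsNonFano (N : Matroid α) : Prop :=
  ∃ (M : Matroid α) (C : Set α), IsFano M ∧ IsRelaxationOf N M C

/-- Isomorphism of matroids on the same ground type. -/
def IsIso (M N : Matroid α) : Prop :=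
  ∃ f : α → α, Set.InjOn f M.E ∧ f '' M.E = N.E ∧
    ∀ I ⊆ M.E, (M.Indep I ↔ N.Indep (f '' I))

/-- `M` is representable over the field `𝔽`. -/
def Representable (M : Matroid α) (𝔽 : Type) [Field 𝔽] : Prop :=
  ∃ (n : ℕ) (φ : α → (Fin n → 𝔽)), ∀ I ⊆ M.E,
    (M.Indep I ↔ LinearIndependent 𝔽 (I.restrict φ))

/-- `L` is a modular 4-point line of `M`. -/
def ModularFourPointLine (M : Matroid α) (L : Set α) : Prop :=
  FourPointLine M L ∧ IsModular M L

lemma mrk_eq_ncard_of_basis {M : Matroid α} (hfin : M.E.Finite) {I X : Set α}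
    (hI : M.IsBasis I X) : mrk M X = I.ncard := by
  have hmem : I.ncard ∈ {n | ∃ J, M.Indep J ∧ J ⊆ X ∧ J.ncard = n} :=
    ⟨I, hI.indep, hI.subset, rfl⟩
  have hub : ∀ n ∈ {n | ∃ J, M.Indep J ∧ J ⊆ X ∧ J.ncard = n}, n ≤ I.ncard := by
    rintro n ⟨J, hJ, hJX, rfl⟩
    obtain ⟨J', hJ', hJJ'⟩ := hJ.subset_isBasis_of_subset hJX hI.subset_ground
    have hcard : J'.encard = I.encard :=
      hJ'.isBase_restrict.encard_eq_encard_of_isBase hI.isBase_restrict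
    have hJ'fin : J'.Finite := hfin.subset hJ'.indep.subset_ground
    calc J.ncard ≤ J'.ncard := ncard_le_ncard hJJ' hJ'fin
      _ = I.ncard := by rw [ncard_def, hcard, ← ncard_def]
  exact le_antisymm (csSup_le ⟨_, hmem⟩ hub) (le_csSup ⟨_, hub⟩ hmem)

lemma mrk_restrict {M : Matroid α} {R X : Set α} (hX : X ⊆ R) :
    mrk (M ↾ R) X = mrk M X := by
  unfold mrk
  congr 1
  ext n
  simp only [mem_setOf_eq, restrict_indep_iff]
  exact ⟨fun ⟨I, ⟨hi, _⟩, hx, hn⟩ ↦ ⟨I, hi, hx, hn⟩,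
    fun ⟨I, hi, hx, hn⟩ ↦ ⟨I, ⟨hi, hx.trans hX⟩, hx, hn⟩⟩

lemma closure_flat' (M : Matroid α) (X : Set α) : M.IsFlat (M.closure X) := by
  rw [Matroid.closure_def]
  have hne : {F | M.IsFlat F ∧ X ∩ M.E ⊆ F}.Nonempty :=
    ⟨M.E, M.ground_isFlat, inter_subset_right⟩
  haveI := hne.coe_sort
  rw [sInter_eq_iInter]
  exact Matroid.IsFlat.iInter fun F ↦ F.2.1

lemma mrk_eq_of_closure_eq {M : Matroid α} (hfin : M.E.Finite) {X Y : Set α}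
    (hXE : X ⊆ M.E) (hYE : Y ⊆ M.E) (h : M.closure X = M.closure Y) :
    mrk M X = mrk M Y := by
  obtain ⟨I, hI⟩ := M.exists_isBasis X hXE
  obtain ⟨J, hJ⟩ := M.exists_isBasis Y hYE
  rw [mrk_eq_ncard_of_basis hfin hI, mrk_eq_ncard_of_basis hfin hJ]
  have hI' : M.IsBasis I (M.closure Y) := h ▸ hI.isBasis_closure_right
  have hcard : I.encard = J.encard :=
    hI'.isBase_restrict.encard_eq_encard_of_isBase hJ.isBasis_closure_right.isBase_restrict
  rw [ncard_def, hcard, ← ncard_def]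


/-- A modular set remains modular after deleting an element outside it. -/
theorem stmt1 (M : Matroid α) (hfin : M.E.Finite) (W : Set α) (hW : W ⊆ M.E)
    (hmod : IsModular M W) (e : α) (he : e ∈ M.E \ W) :
    IsModular (mdelete M {e}) W := by
  intro F hF
  set R := M.E \ {e} with hRdef
  have hR : R ⊆ M.E := diff_subset
  have hFR : F ⊆ R := hF.subset_ground
  have hFE : F ⊆ M.E := hFR.trans hR
  have hWR : W ⊆ R := fun x hx ↦ ⟨hW hx, fun hxe ↦ he.2 (mem_singleton_iff.mp hxe ▸ hx)⟩
  obtain ⟨I, hI⟩ := (M ↾ R).exists_isBasis F (by rw [restrict_ground_eq]; exact hFR)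
  have hIM : M.IsBasis I F := ((isBasis_restrict_iff hR).mp hI).1
  -- closure F ∩ R ⊆ F
  have hclF : M.closure F ∩ R ⊆ F := by
    rintro x ⟨hxcl, hxR⟩
    have hxcl' : x ∈ M.closure I := by rwa [hIM.closure_eq_closure]
    have hxb : M.IsBasis I (insert x I) := hIM.indep.insert_isBasis_iff_mem_closure.2 hxcl'
    have hxb' : (M ↾ R).IsBasis I (insert x I) :=
      (isBasis_restrict_iff hR).2 ⟨hxb, insert_subset hxR (hIM.subset.trans hFR)⟩
    exact hF.subset_of_isBasis_of_isBasis hI hxb' (mem_insert x I)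
  have hF'sub : M.closure F ⊆ F ∪ {e} := by
    intro x hx
    by_cases hxe : x = e
    · exact Or.inr (by simp [hxe])
    · exact Or.inl (hclF ⟨hx, M.closure_subset_ground F hx, hxe⟩)
  -- reduce mrk of restriction to mrk of M
  rw [show mdelete M {e} = M ↾ R from rfl] at *
  rw [mrk_restrict hWR, mrk_restrict hFR, mrk_restrict (union_subset hWR hFR),
    mrk_restrict ((inter_subset_left).trans hWR)]
  -- use modularity against the flat closure F
  have hmodF := hmod (M.closure F) (closure_flat' M F)
  have h1 : mrk M (M.closure F) = mrk M F :=
    mrk_eq_of_closure_eq hfin (M.closure_subset_ground F) hFE (by rw [Matroid.closure_closure])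
  have h2 : mrk M (W ∪ M.closure F) = mrk M (W ∪ F) :=
    mrk_eq_of_closure_eq hfin (union_subset hW (M.closure_subset_ground F))
      (union_subset hW hFE) (by rw [closure_union_closure_right_eq])
  have h3 : W ∩ M.closure F = W ∩ F := by
    apply subset_antisymm
    · rintro x ⟨hxW, hxF'⟩
      rcases hF'sub hxF' with h | h
      · exact ⟨hxW, h⟩
      · exact absurd (mem_singleton_iff.mp h ▸ hxW) he.2
    · exact inter_subset_inter_right W (M.subset_closure F hFE)
  rw [← h1, ← h2, ← h3]
  exact hmodF
end

section
/- If W is a modular set in a matroid M and e ∈ E(M) \ W with e ∉ cl(W), then W is a modular set in the contraction M / e. -/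
open Set Matroid

variable {α : Type*}

section Helpers

variable {M : Matroid α} {I J X W F : Set α} {e : α}

lemma mrk_eq_of_basis' (hfin : M.E.Finite) (hI : M.IsBasis' I X) : mrk M X = I.ncard := by
  have hIfin : I.Finite := hfin.subset hI.indep.subset_ground
  have hub : ∀ n ∈ {n | ∃ J, M.Indep J ∧ J ⊆ X ∧ J.ncard = n}, n ≤ I.ncard := by
    rintro n ⟨J, hJ, hJX, rfl⟩
    obtain ⟨J', hJ', hJJ'⟩ := hJ.subset_isBasis'_of_subset hJX
    have hJ'fin : J'.Finite := hfin.subset hJ'.indep.subset_ground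
    have hcard : J'.encard = I.encard := hJ'.encard_eq_encard hI
    calc J.ncard ≤ J'.ncard := Set.ncard_le_ncard hJJ' hJ'fin
      _ = I.ncard := by rw [Set.ncard_def, hcard, ← Set.ncard_def]
  refine le_antisymm (csSup_le ⟨0, ∅, M.empty_indep, empty_subset _, by simp⟩ hub) ?_
  exact le_csSup ⟨I.ncard, hub⟩ ⟨I, hI.indep, hI.subset, rfl⟩

lemma mrk_eq_of_basis (hfin : M.E.Finite) (hI : M.IsBasis I X) : mrk M X = I.ncard :=
  mrk_eq_of_basis' hfin hI.isBasis'

lemma mcontract_ground (M : Matroid α) (e : α) : (mcontract M {e}).E = M.E \ {e} := rfl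

lemma dual_spanning_compl (he : M.Indep {e}) : M✶.Spanning (M.E \ {e}) := by
  obtain ⟨B, hB, heB⟩ := he.exists_isBase_superset
  have hB' : M✶.IsBase (M.E \ B) := hB.compl_isBase_dual
  refine hB'.spanning.superset (diff_subset_diff_right (singleton_subset_iff.2 (heB rfl))) ?_
  exact diff_subset

lemma dual_basis_base (he : M.Indep {e}) (hB : M✶.IsBasis B (M.E \ {e})) : M✶.IsBase B := by
  refine hB.indep.isBase_of_ground_subset_closure ?_
  rw [hB.closure_eq_closure, (dual_spanning_compl he).closure_eq]

lemma mcontract_indep_iff (he : M.Indep {e}) :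
    (mcontract M {e}).Indep I ↔ I ⊆ M.E \ {e} ∧ M.Indep (insert e I) := by
  have hE : M.E \ {e} ⊆ M✶.E := diff_subset
  constructor
  · intro h
    obtain ⟨hIE, B, hBbase, hdj⟩ := dual_indep_iff_exists'.1 h
    rw [isBase_restrict_iff', isBasis'_iff_isBasis hE] at hBbase
    have hB : M✶.IsBase B := dual_basis_base he hBbase
    have hBc : M.IsBase (M.E \ B) := hB.compl_isBase_of_dual
    have heB : e ∈ M.E \ B := ⟨he.subset_ground rfl, fun h' => (hBbase.subset h').2 rfl⟩
    refine ⟨hIE, hBc.indep.subset (insert_subset heB fun x hx => ?_)⟩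
    exact ⟨(hIE hx).1, fun hxB => (disjoint_left.1 hdj hx) hxB⟩
  · rintro ⟨hIE, hind⟩
    obtain ⟨B₁, hB₁, hsub⟩ := hind.exists_isBase_superset
    have hB : M✶.IsBase (M.E \ B₁) := hB₁.compl_isBase_dual
    have hBE : M.E \ B₁ ⊆ M.E \ {e} :=
      diff_subset_diff_right (singleton_subset_iff.2 (hsub (mem_insert _ _)))
    have hBbasis : M✶.IsBasis (M.E \ B₁) (M.E \ {e}) := by
      refine hB.indep.isBasis_of_subset_of_subset_closure hBE ?_
      rw [hB.closure_eq]
      exact hE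
    rw [mcontract, dual_indep_iff_exists']
    refine ⟨hIE, ⟨M.E \ B₁, ?_, ?_⟩⟩
    · rw [isBase_restrict_iff', isBasis'_iff_isBasis hE]
      exact hBbasis
    · exact disjoint_left.2 fun x hx hxB => hxB.2 (hsub (mem_insert_of_mem _ hx))

lemma mcontract_basis (he : M.Indep {e}) (hX : X ⊆ M.E \ {e})
    (hI : (mcontract M {e}).IsBasis I X) : M.IsBasis (insert e I) (insert e X) := by
  obtain ⟨hIE, hind⟩ := (mcontract_indep_iff he).1 hI.indep
  refine hind.isBasis_of_subset_of_subset_closure (insert_subset_insert hI.subset) ?_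
  refine insert_subset (M.mem_closure_of_mem (mem_insert _ _)
    hind.subset_ground) fun x hxX => ?_
  by_cases hxI : x ∈ insert e I
  · exact M.mem_closure_of_mem hxI hind.subset_ground
  have hxE : x ∈ M.E := (hX hxX).1
  have hxcl : x ∈ (mcontract M {e}).closure I := hI.subset_closure hxX
  rw [hI.indep.mem_closure_iff] at hxcl
  rcases hxcl with hdep | hxI'
  · rw [hind.mem_closure_iff]
    left
    rw [dep_iff]
    have : ¬ (mcontract M {e}).Indep (insert x I) := hdep.not_indep
    rw [mcontract_indep_iff he] at this
    push_neg at this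
    constructor
    · intro hcon
      have hxI2 : x ∉ I := fun h => hxI (mem_insert_of_mem _ h)
      have hxe : x ≠ e := fun h => hxI (h ▸ mem_insert _ _)
      have := this (insert_subset ⟨hxE, hxe⟩ hIE)
      rw [insert_comm] at hcon
      exact this hcon
    · exact insert_subset hxE hind.subset_ground
  · exact absurd (mem_insert_of_mem _ hxI') hxI

lemma mcontract_flat_insert (he : M.Indep {e}) (hF : (mcontract M {e}).IsFlat F) :
    M.IsFlat (insert e F) := by
  have hFE : F ⊆ M.E \ {e} := hF.subset_ground
  have heE : e ∈ M.E := he.subset_ground rfl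
  have hGE : insert e F ⊆ M.E := insert_subset heE (hFE.trans diff_subset)
  have hclsub : M.closure (insert e F) ⊆ insert e F := by
    obtain ⟨I, hI⟩ := (mcontract M {e}).exists_isBasis F hFE
    have hIbas : M.IsBasis (insert e I) (insert e F) := mcontract_basis he hFE hI
    intro x hx
    rw [← hIbas.closure_eq_closure] at hx
    by_cases hxe : x = e
    · exact hxe ▸ mem_insert _ _
    by_cases hxF : x ∈ F
    · exact mem_insert_of_mem _ hxF
    exfalso
    have hxE : x ∈ M.E := M.closure_subset_ground _ hx
    have hxI : x ∉ insert e I := fun h => by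
      rcases h with h | h
      · exact hxe h
      · exact hxF (hI.subset h)
    obtain ⟨hIE, hind⟩ := (mcontract_indep_iff he).1 hI.indep
    rw [hind.mem_closure_iff_of_notMem hxI] at hx
    have hxcl : x ∈ (mcontract M {e}).closure I := by
      rw [hI.indep.mem_closure_iff]
      left
      rw [dep_iff, mcontract_indep_iff he]
      refine ⟨fun hcon => ?_, insert_subset ⟨hxE, hxe⟩ hIE⟩
      rw [insert_comm] at hx
      exact hx.not_indep hcon.2
    rw [hI.closure_eq_closure, hF.closure] at hxcl
    exact hxF hxcl
  refine ⟨fun I X hIF hIX => ?_, hGE⟩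
  have : X ⊆ M.closure (insert e F) :=
    hIX.subset_closure.trans hIF.closure_eq_closure.subset
  exact this.trans hclsub

lemma mrk_insert_of_not_mem_closure (hfin : M.E.Finite) (hXE : X ⊆ M.E) (heE : e ∈ M.E)
    (hecl : e ∉ M.closure X) : mrk M (insert e X) = mrk M X + 1 := by
  obtain ⟨I, hI⟩ := M.exists_isBasis X hXE
  have heI : e ∉ M.closure I := by rwa [hI.closure_eq_closure]
  have heI' : e ∉ I := fun h => heI (M.subset_closure I hI.indep.subset_ground h)
  have hind : M.Indep (insert e I) := by
    rw [hI.indep.insert_indep_iff_of_notMem heI']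
    exact ⟨heE, heI⟩
  have hbas : M.IsBasis (insert e I) (insert e X) := by
    refine hind.isBasis_of_subset_of_subset_closure (insert_subset_insert hI.subset) ?_
    refine insert_subset (M.mem_closure_of_mem (mem_insert _ _)
      hind.subset_ground) ?_
    exact hI.subset_closure.trans (M.closure_subset_closure (subset_insert _ _))
  rw [mrk_eq_of_basis hfin hbas, mrk_eq_of_basis hfin hI,
    Set.ncard_insert_of_notMem heI' (hfin.subset hI.indep.subset_ground)]

lemma mrk_mcontract (hfin : M.E.Finite) (he : M.Indep {e}) (hX : X ⊆ M.E \ {e}) :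
    mrk (mcontract M {e}) X + 1 = mrk M (insert e X) := by
  have hfin' : (mcontract M {e}).E.Finite := by
    rw [mcontract_ground]; exact hfin.diff
  obtain ⟨I, hI⟩ := (mcontract M {e}).exists_isBasis X hX
  have hIbas : M.IsBasis (insert e I) (insert e X) := mcontract_basis he hX hI
  have heI : e ∉ I := fun h => ((hI.indep.subset_ground.trans_eq (mcontract_ground M e)) h).2 rfl
  rw [mrk_eq_of_basis hfin' hI, mrk_eq_of_basis hfin hIbas,
    Set.ncard_insert_of_notMem heI (hfin.subset (hIbas.indep.subset_ground.trans' 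
      (subset_insert _ _)))]

end Helpers

/-- A modular set remains modular after contracting an element outside its closure. -/
theorem stmt2 (M : Matroid α) (hfin : M.E.Finite) (W : Set α) (hW : W ⊆ M.E)
    (hmod : IsModular M W) (e : α) (he : e ∈ M.E \ W) (hecl : e ∉ M.closure W) :
    IsModular (mcontract M {e}) W := by
  have heE : e ∈ M.E := he.1
  have heW : e ∉ W := he.2
  have hee : M.Indep {e} := by
    rw [show ({e} : Set α) = insert e ∅ by simp,
      (M.empty_indep).insert_indep_iff_of_notMem (notMem_empty e)]
    exact ⟨heE, fun h => hecl (M.closure_subset_closure (empty_subset W) h)⟩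
  intro F hF
  have hFE : F ⊆ M.E \ {e} := hF.subset_ground
  have hWE : W ⊆ M.E \ {e} := subset_diff_singleton hW heW
  have hG : M.IsFlat (insert e F) := mcontract_flat_insert hee hF
  have hmodG := hmod (insert e F) hG
  -- rewrite the four contracted ranks
  have h1 : mrk (mcontract M {e}) W + 1 = mrk M (insert e W) :=
    mrk_mcontract hfin hee hWE
  have h1' : mrk M (insert e W) = mrk M W + 1 :=
    mrk_insert_of_not_mem_closure hfin hW heE hecl
  have h2 : mrk (mcontract M {e}) F + 1 = mrk M (insert e F) :=
    mrk_mcontract hfin hee hFE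
  have h3 : mrk (mcontract M {e}) (W ∪ F) + 1 = mrk M (insert e (W ∪ F)) :=
    mrk_mcontract hfin hee (union_subset hWE hFE)
  have h4 : mrk (mcontract M {e}) (W ∩ F) + 1 = mrk M (insert e (W ∩ F)) :=
    mrk_mcontract hfin hee (inter_subset_left.trans hWE)
  have h4' : mrk M (insert e (W ∩ F)) = mrk M (W ∩ F) + 1 :=
    mrk_insert_of_not_mem_closure hfin (inter_subset_left.trans hW) heE
      (fun h => hecl (M.closure_subset_closure inter_subset_left h))
  have hU : W ∪ insert e F = insert e (W ∪ F) := by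
    ext x; simp [or_comm, or_assoc, or_left_comm]
  have hI : W ∩ insert e F = W ∩ F := by
    ext x
    simp only [mem_inter_iff, mem_insert_iff]
    exact ⟨fun ⟨h1, h2⟩ => ⟨h1, h2.resolve_left fun h => heW (h ▸ h1)⟩,
      fun ⟨h1, h2⟩ => ⟨h1, Or.inr h2⟩⟩
  rw [hU, hI] at hmodG
  omega
end

section
/- Let M be a matroid and S, T disjoint subsets of E(M). If E(M) = cl(S) ∪ cl(T) and ⊓_M(S, T) ≤ 1, then the partition (cl(S) \ T, E(M) \ (cl(S) \ T)) has connectivity λ at most 1, so κ_M(S, T) ≤ 1. -/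
open Set Matroid

variable {α : Type*}

lemma mrk_basis' {M : Matroid α} (hfin : M.E.Finite) {I X : Set α}
    (hI : M.IsBasis' I X) : mrk M X = I.ncard := by
  have hub : ∀ n ∈ {n | ∃ J, M.Indep J ∧ J ⊆ X ∧ J.ncard = n}, n ≤ I.ncard := by
    rintro n ⟨J, hJ, hJX, rfl⟩
    obtain ⟨K, hK, hJK⟩ := hJ.subset_isBasis'_of_subset hJX
    have hKI : K.ncard = I.ncard := by
      rw [Set.ncard_def, hK.encard_eq_encard hI, ← Set.ncard_def]
    calc J.ncard ≤ K.ncard :=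
          Set.ncard_le_ncard hJK (hfin.subset hK.indep.subset_ground)
      _ = I.ncard := hKI
  exact IsGreatest.csSup_eq ⟨⟨I, hI.indep, hI.subset, rfl⟩, hub⟩

lemma mrk_mono {M : Matroid α} (hfin : M.E.Finite) {X Y : Set α} (hXY : X ⊆ Y) :
    mrk M X ≤ mrk M Y := by
  obtain ⟨I, hI⟩ := M.exists_isBasis' X
  obtain ⟨K, hK, hIK⟩ := hI.indep.subset_isBasis'_of_subset (hI.subset.trans hXY)
  rw [mrk_basis' hfin hI, mrk_basis' hfin hK]
  exact Set.ncard_le_ncard hIK (hfin.subset hK.indep.subset_ground)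

lemma mrk_closure_eq {M : Matroid α} (hfin : M.E.Finite) (X : Set α) :
    mrk M (M.closure X) = mrk M X := by
  obtain ⟨I, hI⟩ := M.exists_isBasis' X
  rw [mrk_basis' hfin hI, mrk_basis' hfin hI.isBasis_closure_right.isBasis']

/-- If `E(M) = cl(S) ∪ cl(T)` for disjoint `S`, `T` with local connectivity at most 1,
then the partition `(cl(S) \ T, E(M) \ (cl(S) \ T))` has connectivity at most 1,
and hence `κ_M(S, T) ≤ 1`. -/
theorem stmt18 (M : Matroid α) (hfin : M.E.Finite) (S T : Set α)
    (hS : S ⊆ M.E) (hT : T ⊆ M.E) (hdisj : Disjoint S T)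
    (hcover : M.E = M.closure S ∪ M.closure T)
    (hloc : mrk M S + mrk M T ≤ mrk M (S ∪ T) + 1) :
    mrk M (M.closure S \ T) + mrk M (M.E \ (M.closure S \ T)) ≤ mrk M M.E + 1 ∧
      ∃ A, S ⊆ A ∧ A ⊆ M.E \ T ∧ mrk M A + mrk M (M.E \ A) ≤ mrk M M.E + 1 := by
  set A : Set α := M.closure S \ T with hA
  have hSA : S ⊆ A := subset_diff.2 ⟨M.subset_closure S hS, hdisj⟩
  have hAE : A ⊆ M.E \ T :=
    diff_subset_diff_left (M.closure_subset_ground S)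
  have hrA : mrk M A ≤ mrk M S := by
    calc mrk M A ≤ mrk M (M.closure S) := mrk_mono hfin diff_subset
      _ = mrk M S := mrk_closure_eq hfin S
  have hcompl : M.E \ A ⊆ M.closure T := by
    rintro x ⟨hxE, hxA⟩
    by_cases hx : x ∈ M.closure S
    · have hxT : x ∈ T := by
        by_contra hxT
        exact hxA ⟨hx, hxT⟩
      exact M.subset_closure T hT hxT
    · rcases (hcover ▸ hxE) with h | h
      · exact absurd h hx
      · exact h
  have hrB : mrk M (M.E \ A) ≤ mrk M T := by
    calc mrk M (M.E \ A) ≤ mrk M (M.closure T) := mrk_mono hfin hcompl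
      _ = mrk M T := mrk_closure_eq hfin T
  have hEr : mrk M M.E ≤ mrk M (S ∪ T) := by
    have hEsub : M.E ⊆ M.closure (S ∪ T) := by
      rw [hcover]
      exact union_subset (M.closure_mono subset_union_left)
        (M.closure_mono subset_union_right)
    calc mrk M M.E ≤ mrk M (M.closure (S ∪ T)) := mrk_mono hfin hEsub
      _ = mrk M (S ∪ T) := mrk_closure_eq hfin _
  have hEr' : mrk M (S ∪ T) ≤ mrk M M.E :=
    mrk_mono hfin (union_subset hS hT)
  have key : mrk M A + mrk M (M.E \ A) ≤ mrk M M.E + 1 := by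
    calc mrk M A + mrk M (M.E \ A) ≤ mrk M S + mrk M T := add_le_add hrA hrB
      _ ≤ mrk M (S ∪ T) + 1 := hloc
      _ ≤ mrk M M.E + 1 := by omega
  exact ⟨key, A, hSA, hAE, key⟩
end
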